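/- Let (T,d) be a compact metric space, m a Borel probability measure on T, φ a Young function with φ(1)=1, and R > 2. Fix integers 0 ≤ k ≤ l and x ∈ T. If f : T → ℝ is a bounded Borel function which vanishes on B^l_k(x), then S_l S_{l-1} ⋯ S_k f (x) = 0 (i.e. the measure representing the iterated averaging operator at x is supported in B^l_k(x)). -/
import Mathlib


open MeasureTheory ENNReal Filter

noncomputable section

/-- A (finite) Young function: an increasing convex function `φ : [0,∞) → [0,∞)`
with `φ 0 = 0` and `φ x → ∞` as `x → ∞`. -/
def IsYoungFunction (φ : ℝ → ℝ) : Prop :=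
  MonotoneOn φ (Set.Ici 0) ∧ ConvexOn ℝ (Set.Ici 0) φ ∧ φ 0 = 0 ∧
    Tendsto φ atTop atTop

/-- Generalized inverse of a Young function, as a map `ℝ≥0∞ → ℝ≥0∞`
(so that in particular `φ⁻¹(∞) = ∞`). -/
def yinv (φ : ℝ → ℝ) (y : ℝ≥0∞) : ℝ≥0∞ :=
  sInf {x : ℝ≥0∞ | ∃ r : ℝ, 0 ≤ r ∧ x = ENNReal.ofReal r ∧ y ≤ ENNReal.ofReal (φ r)}

/-- The minorizing metric
`τ_{m,φ}(s,t) = max_{x ∈ {s,t}} ∫_0^{d(s,t)} φ⁻¹(1 / m(B(x,ε))) dε`,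
with the conventions `1/0 = ∞`, `φ⁻¹(∞) = ∞`. -/
def tauDist {T : Type*} [MetricSpace T] [MeasurableSpace T]
    (m : Measure T) (φ : ℝ → ℝ) (s t : T) : ℝ≥0∞ :=
  max (∫⁻ ε in Set.Ioc (0 : ℝ) (dist s t), yinv φ (1 / m (Metric.closedBall s ε)))
    (∫⁻ ε in Set.Ioc (0 : ℝ) (dist s t), yinv φ (1 / m (Metric.closedBall t ε)))

/-- `f^d(u,v) = |f(u) - f(v)| / d(u,v)`, equal to `0` on the diagonal. -/
def fdiv {T : Type*} [MetricSpace T] (f : T → ℝ) (p : T × T) : ℝ :=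
  |f p.1 - f p.2| / dist p.1 p.2

/-- The Luxemburg norm `|g|^ν_χ = inf {a > 0 : ∫ χ(|g|/a) dν ≤ 1}`, with value `∞`
if no such `a` exists. -/
def luxNorm {X : Type*} [MeasurableSpace X] (ν : Measure X) (χ : ℝ → ℝ)
    (g : X → ℝ) : ℝ≥0∞ :=
  sInf {a : ℝ≥0∞ | ∃ b : ℝ, 0 < b ∧ a = ENNReal.ofReal b ∧
    ∫⁻ u, ENNReal.ofReal (χ (|g u| / b)) ∂ν ≤ 1}

/-- The Amemiya norm `‖g‖^μ_χ = inf_{a>0} a (1 + ∫ χ(|g|/a) dμ)`. -/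
def amemiyaNorm {X : Type*} [MeasurableSpace X] (μ : Measure X) (χ : ℝ → ℝ)
    (g : X → ℝ) : ℝ≥0∞ :=
  sInf {c : ℝ≥0∞ | ∃ a : ℝ, 0 < a ∧
    c = ENNReal.ofReal a * (1 + ∫⁻ u, ENNReal.ofReal (χ (|g u| / a)) ∂μ)}

/-- `r_0(x) = D(T)` and, for `k ≥ 1`,
`r_k(x) = min {ε ≥ 0 : 1 / m(B(x,ε)) ≤ φ(R^k)}` (with `1/0 = ∞`). -/
def rad {T : Type*} [MetricSpace T] [MeasurableSpace T]
    (m : Measure T) (φ : ℝ → ℝ) (R : ℝ) : ℕ → T → ℝ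
  | 0, _ => Metric.diam (Set.univ : Set T)
  | k + 1, x => sInf {ε : ℝ | 0 ≤ ε ∧
      1 / m (Metric.closedBall x ε) ≤ ENNReal.ofReal (φ (R ^ (k + 1)))}

/-- `r^l_k(x) = ∑_{i=k}^{l} 2^(i-k) r_i(x)`. -/
def radl {T : Type*} [MetricSpace T] [MeasurableSpace T]
    (m : Measure T) (φ : ℝ → ℝ) (R : ℝ) (k l : ℕ) (x : T) : ℝ :=
  ∑ i ∈ Finset.Icc k l, (2 : ℝ) ^ (i - k) * rad m φ R i x

/-- The averaging operator `S_k f (x) = (1 / m(B_k(x))) ∫_{B_k(x)} f dm`,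
with the convention `0/0 = 0`. -/
def avg {T : Type*} [MetricSpace T] [MeasurableSpace T]
    (m : Measure T) (φ : ℝ → ℝ) (R : ℝ) (k : ℕ) (f : T → ℝ) (x : T) : ℝ :=
  (∫ u in Metric.closedBall x (rad m φ R k x), f u ∂m) /
    (m (Metric.closedBall x (rad m φ R k x))).toReal

/-- The iterated averaging operator `iterAvg k l f = S_l S_{l-1} ⋯ S_k f` (for `k ≤ l`). -/
def iterAvg {T : Type*} [MetricSpace T] [MeasurableSpace T]
    (m : Measure T) (φ : ℝ → ℝ) (R : ℝ) (k : ℕ) : ℕ → (T → ℝ) → T → ℝ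
  | 0, f => avg m φ R 0 f
  | l + 1, f =>
      if l + 1 ≤ k then avg m φ R (l + 1) f
      else avg m φ R (l + 1) (iterAvg m φ R k l f)

/-- The set `{k ≥ 1 : B^l_k(s) ∪ B^l_k(t) ⊆ B°(u, r_{k-1}(u)) for every u ∈ B^l_k(x)}`,
whose greatest element is `τ_x`. -/
def tauSet {T : Type*} [MetricSpace T] [MeasurableSpace T]
    (m : Measure T) (φ : ℝ → ℝ) (R : ℝ) (l : ℕ) (s t x : T) : Set ℕ :=
  {k : ℕ | 1 ≤ k ∧ ∀ u ∈ Metric.closedBall x (radl m φ R k l x),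
    Metric.closedBall s (radl m φ R k l s) ∪ Metric.closedBall t (radl m φ R k l t) ⊆
      Metric.ball u (rad m φ R (k - 1) u)}

section Aux

variable {T : Type*} [MetricSpace T] [CompactSpace T] [MeasurableSpace T] [BorelSpace T]
  (m : Measure T) [IsProbabilityMeasure m] (φ : ℝ → ℝ) (R : ℝ)

lemma rad_set_mem_diam (hφ : IsYoungFunction φ) (hφ1 : φ 1 = 1) (hR : 2 < R)
    (i : ℕ) (x : T) :
    Metric.diam (Set.univ : Set T) ∈ {ε : ℝ | 0 ≤ ε ∧
      1 / m (Metric.closedBall x ε) ≤ ENNReal.ofReal (φ (R ^ (i + 1)))} := by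
  have hball : (Set.univ : Set T) ⊆ Metric.closedBall x (Metric.diam (Set.univ : Set T)) := by
    intro y _
    exact Metric.mem_closedBall.2
      (Metric.dist_le_diam_of_mem isCompact_univ.isBounded trivial trivial)
  have hmeas : m (Metric.closedBall x (Metric.diam (Set.univ : Set T))) = 1 := by
    refine le_antisymm prob_le_one ?_
    calc (1 : ℝ≥0∞) = m Set.univ := (measure_univ).symm
      _ ≤ _ := measure_mono hball
  refine ⟨Metric.diam_nonneg, ?_⟩
  rw [hmeas, one_div, inv_one]
  have hR1 : (1 : ℝ) ≤ R ^ (i + 1) := one_le_pow₀ (by linarith)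
  have : (1 : ℝ) ≤ φ (R ^ (i + 1)) := by
    calc (1 : ℝ) = φ 1 := hφ1.symm
      _ ≤ φ (R ^ (i + 1)) := hφ.1 (by norm_num) (le_trans zero_le_one hR1) hR1
  calc (1 : ℝ≥0∞) = ENNReal.ofReal 1 := by simp
    _ ≤ ENNReal.ofReal (φ (R ^ (i + 1))) := ENNReal.ofReal_le_ofReal this

lemma rad_nonneg (i : ℕ) (x : T) : 0 ≤ rad m φ R i x := by
  cases i with
  | zero => exact Metric.diam_nonneg
  | succ j =>
    exact Real.sInf_nonneg (fun ε hε => hε.1)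

lemma rad_le (hφ : IsYoungFunction φ) (hφ1 : φ 1 = 1) (hR : 2 < R)
    (i : ℕ) (u x : T) : rad m φ R i u ≤ dist u x + rad m φ R i x := by
  cases i with
  | zero =>
    simp only [rad]
    have := dist_nonneg (x := u) (y := x)
    linarith
  | succ j =>
    show sInf _ ≤ dist u x + sInf _
    have hne : {ε : ℝ | 0 ≤ ε ∧
        1 / m (Metric.closedBall x ε) ≤ ENNReal.ofReal (φ (R ^ (j + 1)))}.Nonempty :=
      ⟨_, rad_set_mem_diam m φ R hφ hφ1 hR j x⟩
    have hbdd : BddBelow {ε : ℝ | 0 ≤ ε ∧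
        1 / m (Metric.closedBall u ε) ≤ ENNReal.ofReal (φ (R ^ (j + 1)))} :=
      ⟨0, fun ε hε => hε.1⟩
    rw [← sub_le_iff_le_add']
    refine le_csInf hne ?_
    intro ε hε
    rw [sub_le_iff_le_add']
    refine csInf_le hbdd ⟨add_nonneg dist_nonneg hε.1, ?_⟩
    have hsub : Metric.closedBall x ε ⊆ Metric.closedBall u (dist u x + ε) := by
      intro v hv
      simp only [Metric.mem_closedBall] at hv ⊢
      calc dist v u ≤ dist v x + dist x u := dist_triangle v x u
        _ ≤ ε + dist x u := by linarith
        _ = dist u x + ε := by rw [dist_comm]; ring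
    calc 1 / m (Metric.closedBall u (dist u x + ε))
        ≤ 1 / m (Metric.closedBall x ε) := by
          exact ENNReal.div_le_div_left (measure_mono hsub) 1
      _ ≤ ENNReal.ofReal (φ (R ^ (j + 1))) := hε.2

lemma geom_Icc (k l : ℕ) (hkl : k ≤ l) :
    ∑ i ∈ Finset.Icc k l, (2 : ℝ) ^ (i - k) = 2 ^ (l + 1 - k) - 1 := by
  induction l, hkl using Nat.le_induction with
  | base =>
    simp [Nat.succ_sub k.le_refl]
    norm_num
  | succ l hkl ih =>
    have h1 : l + 1 + 1 - k = (l + 1 - k) + 1 := by omega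
    rw [Finset.sum_Icc_succ_top (le_trans hkl (Nat.le_succ l)), ih, h1, pow_succ]
    ring

lemma radl_le (hφ : IsYoungFunction φ) (hφ1 : φ 1 = 1) (hR : 2 < R)
    (k l : ℕ) (hkl : k ≤ l) (u x : T) :
    radl m φ R k l u ≤ ((2 : ℝ) ^ (l + 1 - k) - 1) * dist u x + radl m φ R k l x := by
  unfold radl
  calc ∑ i ∈ Finset.Icc k l, (2 : ℝ) ^ (i - k) * rad m φ R i u
      ≤ ∑ i ∈ Finset.Icc k l, (2 : ℝ) ^ (i - k) * (dist u x + rad m φ R i x) := by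
        refine Finset.sum_le_sum fun i _ => ?_
        exact mul_le_mul_of_nonneg_left (rad_le m φ R hφ hφ1 hR i u x) (by positivity)
    _ = (∑ i ∈ Finset.Icc k l, (2 : ℝ) ^ (i - k)) * dist u x
        + ∑ i ∈ Finset.Icc k l, (2 : ℝ) ^ (i - k) * rad m φ R i x := by
        rw [Finset.sum_mul, ← Finset.sum_add_distrib]
        congr 1; ext i; ring
    _ = _ := by rw [geom_Icc k l hkl]

lemma iterAvg_self (k : ℕ) (f : T → ℝ) :
    iterAvg m φ R k k f = avg m φ R k f := by
  cases k with
  | zero => rfl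
  | succ j => simp [iterAvg]

lemma avg_eq_zero (k : ℕ) (g : T → ℝ) (x : T)
    (hg : ∀ u ∈ Metric.closedBall x (rad m φ R k x), g u = 0) :
    avg m φ R k g x = 0 := by
  unfold avg
  rw [MeasureTheory.setIntegral_eq_zero_of_forall_eq_zero hg, zero_div]

end Aux

/-- Lemma 6 of the paper: the measure representing the iterated
averaging operator `S_l S_{l-1} ⋯ S_k` at `x` is supported in `B^l_k(x)`. -/
theorem statement14 (T : Type) [MetricSpace T] [CompactSpace T]
    [MeasurableSpace T] [BorelSpace T]
    (m : Measure T) (hm : IsProbabilityMeasure m)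
    (φ : ℝ → ℝ) (hφ : IsYoungFunction φ) (hφ1 : φ 1 = 1)
    (R : ℝ) (hR : 2 < R)
    (k l : ℕ) (hkl : k ≤ l) (x : T)
    (f : T → ℝ) (hf : Measurable f) (hbd : ∃ C : ℝ, ∀ u : T, |f u| ≤ C)
    (hvanish : ∀ u ∈ Metric.closedBall x (radl m φ R k l x), f u = 0) :
    iterAvg m φ R k l f x = 0 := by
  induction l, hkl using Nat.le_induction generalizing x with
  | base =>
    rw [iterAvg_self]
    refine avg_eq_zero m φ R k f x fun u hu => ?_
    refine hvanish u ?_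
    simpa [radl] using hu
  | succ l hkl ih =>
    have hnk : ¬ (l + 1 ≤ k) := by omega
    rw [show iterAvg m φ R k (l + 1) f = avg m φ R (l + 1) (iterAvg m φ R k l f) by
      simp [iterAvg, hnk]]
    refine avg_eq_zero m φ R (l + 1) _ x fun u hu => ?_
    refine ih u fun v hv => ?_
    refine hvanish v ?_
    -- distance computation
    simp only [Metric.mem_closedBall] at hu hv ⊢
    have hru : radl m φ R k l u ≤ ((2:ℝ) ^ (l + 1 - k) - 1) * dist u x + radl m φ R k l x :=
      radl_le m φ R hφ hφ1 hR k l hkl u x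
    have hsplit : radl m φ R k (l + 1) x
        = radl m φ R k l x + (2:ℝ) ^ (l + 1 - k) * rad m φ R (l + 1) x := by
      unfold radl
      rw [Finset.sum_Icc_succ_top (by omega : k ≤ l + 1)]
    have hpow : (0:ℝ) ≤ (2:ℝ) ^ (l + 1 - k) - 1 := by
      have : (1:ℝ) ≤ 2 ^ (l + 1 - k) := one_le_pow₀ (by norm_num)
      linarith
    have hd : dist u x ≤ rad m φ R (l + 1) x := hu
    calc dist v x ≤ dist v u + dist u x := dist_triangle v u x
      _ ≤ radl m φ R k l u + dist u x := by linarith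
      _ ≤ ((2:ℝ) ^ (l + 1 - k) - 1) * dist u x + radl m φ R k l x + dist u x := by linarith
      _ = radl m φ R k l x + (2:ℝ) ^ (l + 1 - k) * dist u x := by ring
      _ ≤ radl m φ R k l x + (2:ℝ) ^ (l + 1 - k) * rad m φ R (l + 1) x := by
          have : (0:ℝ) ≤ (2:ℝ) ^ (l + 1 - k) := by positivity
          nlinarith
      _ = radl m φ R k (l + 1) x := hsplit.symm
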